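/- arXiv:2410.20068 — 4 statements merged into one kernel-verified Lean document; each statement's English description precedes it below -/
import Mathlib

section
/- Let S = D̃^{-1}Ã as above. If f ∈ ℝ^n satisfies |f_i − f_j| ≤ Δ for every edge (i,j), then for every natural number L ≥ 1, ‖S^L f − f‖_∞ ≤ L·Δ. -/
open Matrix

/-- The row-normalized adjacency matrix with self-loops `S = D̃⁻¹Ã`. -/
noncomputable def Smat {n : ℕ} (G : SimpleGraph (Fin n)) [DecidableRel G.Adj] :
    Matrix (Fin n) (Fin n) ℝ :=
  Matrix.of fun i j => ((G.adjMatrix ℝ + 1) i j) / ((G.degree i : ℝ) + 1)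

lemma Smat_nonneg {n : ℕ} (G : SimpleGraph (Fin n)) [DecidableRel G.Adj] (i j : Fin n) :
    0 ≤ Smat G i j := by
  unfold Smat
  simp only [Matrix.of_apply, Matrix.add_apply, SimpleGraph.adjMatrix_apply, Matrix.one_apply]
  apply div_nonneg
  · apply add_nonneg <;> split <;> norm_num
  · positivity

lemma Smat_row_sum {n : ℕ} (G : SimpleGraph (Fin n)) [DecidableRel G.Adj] (i : Fin n) :
    ∑ j, Smat G i j = 1 := by
  unfold Smat
  simp only [Matrix.of_apply]
  rw [← Finset.sum_div]
  have h : ∑ j, (G.adjMatrix ℝ + 1) i j = (G.degree i : ℝ) + 1 := by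
    simp only [Matrix.add_apply, SimpleGraph.adjMatrix_apply, Matrix.one_apply,
      Finset.sum_add_distrib]
    congr 1
    · rw [Finset.sum_boole]
      rw [SimpleGraph.degree]
      congr 1
      rw [SimpleGraph.neighborFinset_eq_filter]
    · simp
  rw [h, div_self (by positivity)]

lemma Smat_contract {n : ℕ} (G : SimpleGraph (Fin n)) [DecidableRel G.Adj]
    {g : Fin n → ℝ} {c : ℝ} (_hc : 0 ≤ c) (hg : ∀ j, |g j| ≤ c) (i : Fin n) :
    |(Smat G).mulVec g i| ≤ c := by
  rw [Matrix.mulVec, dotProduct]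
  calc |∑ j, Smat G i j * g j| ≤ ∑ j, |Smat G i j * g j| := Finset.abs_sum_le_sum_abs _ _
    _ ≤ ∑ j, Smat G i j * c := by
        apply Finset.sum_le_sum
        intro j _
        rw [abs_mul, abs_of_nonneg (Smat_nonneg G i j)]
        exact mul_le_mul_of_nonneg_left (hg j) (Smat_nonneg G i j)
    _ = c := by rw [← Finset.sum_mul, Smat_row_sum, one_mul]

lemma Smat_pow_contract {n : ℕ} (G : SimpleGraph (Fin n)) [DecidableRel G.Adj]
    {g : Fin n → ℝ} {c : ℝ} (hc : 0 ≤ c) (hg : ∀ j, |g j| ≤ c) (k : ℕ) (i : Fin n) :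
    |(Smat G ^ k).mulVec g i| ≤ c := by
  induction k generalizing i with
  | zero => simpa using hg i
  | succ k ih =>
      rw [pow_succ', ← Matrix.mulVec_mulVec]
      exact Smat_contract G hc ih i

lemma Smat_step {n : ℕ} (G : SimpleGraph (Fin n)) [DecidableRel G.Adj]
    (f : Fin n → ℝ) (Δ : ℝ) (hΔ : 0 < Δ)
    (hsm : ∀ i j : Fin n, G.Adj i j → |f i - f j| ≤ Δ) (i : Fin n) :
    |(Smat G).mulVec f i - f i| ≤ Δ := by
  have hfi : f i = ∑ j, Smat G i j * f i := by
    rw [← Finset.sum_mul, Smat_row_sum, one_mul]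
  rw [Matrix.mulVec, dotProduct]
  calc |∑ j, Smat G i j * f j - f i|
      = |∑ j, Smat G i j * (f j - f i)| := by
        have key : ∑ j, Smat G i j * (f j - f i) = (∑ j, Smat G i j * f j) - f i := by
          simp only [mul_sub]
          rw [Finset.sum_sub_distrib, ← Finset.sum_mul, Smat_row_sum, one_mul]
        rw [key]
    _ ≤ ∑ j, |Smat G i j * (f j - f i)| := Finset.abs_sum_le_sum_abs _ _
    _ ≤ ∑ j, Smat G i j * Δ := by
        apply Finset.sum_le_sum
        intro j _
        rw [abs_mul, abs_of_nonneg (Smat_nonneg G i j)]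
        by_cases hij : j = i
        · rw [hij, sub_self, abs_zero, mul_zero]
          exact mul_nonneg (Smat_nonneg G i i) hΔ.le
        · by_cases hadj : G.Adj i j
          · exact mul_le_mul_of_nonneg_left
              (by rw [abs_sub_comm]; exact hsm i j hadj) (Smat_nonneg G i j)
          · have : Smat G i j = 0 := by
              unfold Smat
              simp only [Matrix.of_apply, Matrix.add_apply, SimpleGraph.adjMatrix_apply,
                Matrix.one_apply]
              rw [if_neg hadj, if_neg (fun h => hij h.symm)]
              simp
            simp [this]
    _ = Δ := by rw [← Finset.sum_mul, Smat_row_sum, one_mul]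

/-- If `|f i − f j| ≤ Δ` on every edge, then `‖S^L f − f‖_∞ ≤ LΔ` for all `L ≥ 1`. -/
theorem stmt1 {n : ℕ} (G : SimpleGraph (Fin n)) [DecidableRel G.Adj]
    (f : Fin n → ℝ) (Δ : ℝ) (hΔ : 0 < Δ)
    (hsm : ∀ i j : Fin n, G.Adj i j → |f i - f j| ≤ Δ) :
    ∀ L : ℕ, 1 ≤ L → ∀ i : Fin n, |((Smat G ^ L).mulVec f) i - f i| ≤ (L : ℝ) * Δ := by
  intro L _ i
  have htel : (Smat G ^ L).mulVec f i - f i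
      = ∑ k ∈ Finset.range L, ((Smat G ^ k).mulVec ((Smat G).mulVec f - f)) i := by
    have htel0 := Finset.sum_range_sub (fun k => (Smat G ^ k).mulVec f i) L
    have h0 : (Smat G ^ 0).mulVec f i = f i := by simp
    rw [← h0, ← htel0]
    apply Finset.sum_congr rfl
    intro k _
    rw [pow_succ, ← Matrix.mulVec_mulVec, Matrix.mulVec_sub]
    simp
  rw [htel]
  calc |∑ k ∈ Finset.range L, ((Smat G ^ k).mulVec ((Smat G).mulVec f - f)) i|
      ≤ ∑ k ∈ Finset.range L, |((Smat G ^ k).mulVec ((Smat G).mulVec f - f)) i| :=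
        Finset.abs_sum_le_sum_abs _ _
    _ ≤ ∑ _k ∈ Finset.range L, Δ := by
        apply Finset.sum_le_sum
        intro k _
        exact Smat_pow_contract G hΔ.le
          (fun j => by simpa using Smat_step G f Δ hΔ hsm j) k i
    _ = (L : ℝ) * Δ := by rw [Finset.sum_const, Finset.card_range, nsmul_eq_mul]
end

section
/- Suppose there is a path i = v_0, v_1, …, v_{L-1}, v_L = j in the graph with deg(v_0) = d and deg(v_k) ≤ 3 for 1 ≤ k ≤ L−1. Then E[(S^L ε)_i^2] ≥ (d+1)^{-2}·4^{2−2L}. -/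
/-!
For orthonormal noise, `E[(S^L ε)ᵢ²]` is the squared norm of the `i`-th row of `S^L`, so it
suffices to bound the single entry `(S^L)ᵢⱼ` from below. Since `S` is entrywise nonnegative,
`(S^L)ᵢⱼ` dominates the weight of the given path, a product of the entries `1/(deg v + 1)` along
it: the first factor is `1/(d+1)`, and each of the other `L - 1` factors is at least `1/4`.
-/

open Matrix MeasureTheory

section Noise

variable {ι Ω : Type*} [Fintype ι] [DecidableEq ι] [MeasurableSpace Ω] {μ : Measure Ω}
  {ε : ι → Ω → ℝ}

theorem integral_dotProduct_sq_of_orthonormal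
    (hint2 : ∀ k l, Integrable (fun ω => ε k ω * ε l ω) μ)
    (hcov : ∀ k l, ∫ ω, ε k ω * ε l ω ∂μ = if k = l then 1 else 0) (c : ι → ℝ) :
    ∫ ω, (c ⬝ᵥ fun k => ε k ω) ^ 2 ∂μ = ∑ k, c k ^ 2 := by
  have hexpand : ∀ ω, (c ⬝ᵥ fun k => ε k ω) ^ 2
      = ∑ k, ∑ l, (c k * c l) * (ε k ω * ε l ω) := by
    intro ω
    simp only [dotProduct, sq, Finset.sum_mul_sum]
    refine Finset.sum_congr rfl fun k _ => Finset.sum_congr rfl fun l _ => by ring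
  simp_rw [hexpand]
  rw [integral_finsetSum _ fun k _ => integrable_finsetSum _ fun l _ => (hint2 k l).const_mul _]
  refine Finset.sum_congr rfl fun k _ => ?_
  rw [integral_finsetSum _ fun l _ => (hint2 k l).const_mul _]
  simp_rw [integral_const_mul, hcov, mul_ite, mul_one, mul_zero, Finset.sum_ite_eq,
    Finset.mem_univ, if_true, sq]

end Noise

section NonnegMatrix

variable {V R : Type*} [Fintype V] [DecidableEq V] [Semiring R] [PartialOrder R]
  [IsOrderedRing R] {A : Matrix V V R}

theorem mul_pow_apply_le_pow_succ_apply (hA : ∀ a b, 0 ≤ A a b) (m : ℕ) (a v b : V) :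
    A a v * (A ^ m) v b ≤ (A ^ (m + 1)) a b := by
  rw [pow_succ', mul_apply]
  exact Finset.single_le_sum (f := fun k => A a k * (A ^ m) k b)
    (fun k _ => mul_nonneg (hA a k) (pow_apply_nonneg hA m k b)) (Finset.mem_univ v)

theorem pow_length_le_pow_apply_of_walk {G : SimpleGraph V} (hA : ∀ a b, 0 ≤ A a b)
    {c : R} (hc : 0 ≤ c) {a b : V} (q : G.Walk a b) (hq : ∀ e ∈ q.darts, c ≤ A e.fst e.snd) :
    c ^ q.length ≤ (A ^ q.length) a b := by
  induction q with
  | nil => simp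
  | @cons u v w h q ih =>
    simp only [SimpleGraph.Walk.darts_cons, List.mem_cons, forall_eq_or_imp] at hq
    calc c ^ (q.cons h).length = c * c ^ q.length := by
          rw [SimpleGraph.Walk.length_cons, pow_succ']
      _ ≤ A u v * (A ^ q.length) v w :=
          mul_le_mul hq.1 (ih hq.2) (pow_nonneg hc _) (hA u v)
      _ ≤ (A ^ (q.cons h).length) u w := mul_pow_apply_le_pow_succ_apply hA _ u v w

end NonnegMatrix

theorem SimpleGraph.Walk.IsPath.fst_ne_of_mem_darts {V : Type*} {G : SimpleGraph V} {u v : V}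
    {p : G.Walk u v} (hp : p.IsPath) {e : G.Dart} (he : e ∈ p.darts) : e.fst ≠ v := by
  have hnodup := hp.support_nodup
  rw [← p.map_fst_darts_append, List.nodup_append] at hnodup
  exact hnodup.2.2 _ (List.mem_map_of_mem he) _ (List.mem_singleton_self v)

section Smat

variable {n : ℕ} (G : SimpleGraph (Fin n)) [DecidableRel G.Adj]

theorem Smat_nonneg_s17 (a b : Fin n) : 0 ≤ Smat G a b := by
  simp only [Smat, of_apply, Matrix.add_apply, one_apply, SimpleGraph.adjMatrix_apply]
  apply div_nonneg
  · split_ifs <;> norm_num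
  · positivity

theorem Smat_apply_of_adj {a b : Fin n} (h : G.Adj a b) :
    Smat G a b = 1 / ((G.degree a : ℝ) + 1) := by
  simp [Smat, h, h.ne]

theorem inv_four_le_Smat_apply {a b : Fin n} (h : G.Adj a b) (ha : G.degree a ≤ 3) :
    1 / 4 ≤ Smat G a b := by
  rw [Smat_apply_of_adj G h]
  have : (G.degree a : ℝ) ≤ 3 := by exact_mod_cast ha
  gcongr
  linarith

theorem Smat_pow_apply_ge_of_path {i j : Fin n} (p : G.Walk i j) (hpath : p.IsPath)
    (hL : 1 ≤ p.length) (hdeg : ∀ v ∈ p.support, v ≠ i → v ≠ j → G.degree v ≤ 3) :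
    1 / ((G.degree i : ℝ) + 1) * (1 / 4) ^ (p.length - 1) ≤ (Smat G ^ p.length) i j := by
  cases p with
  | nil => simp at hL
  | @cons _ v _ hadj q =>
    obtain ⟨hq, hi⟩ := (SimpleGraph.Walk.cons_isPath_iff _ _).mp hpath
    have hinterior : ∀ e ∈ q.darts, 1 / 4 ≤ Smat G e.fst e.snd := by
      intro e he
      have hmem : e.fst ∈ q.support := q.dart_fst_mem_support_of_mem_darts he
      refine inv_four_le_Smat_apply G e.adj
        (hdeg _ (by simp [hmem]) ?_ (hq.fst_ne_of_mem_darts he))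
      rintro rfl
      exact hi hmem
    calc 1 / ((G.degree i : ℝ) + 1) * (1 / 4) ^ ((q.cons hadj).length - 1)
        = Smat G i v * (1 / 4) ^ q.length := by
          rw [Smat_apply_of_adj G hadj, SimpleGraph.Walk.length_cons, Nat.add_sub_cancel]
      _ ≤ Smat G i v * (Smat G ^ q.length) v j := by
          gcongr
          · exact Smat_nonneg_s17 G i v
          · exact pow_length_le_pow_apply_of_walk (Smat_nonneg_s17 G) (by norm_num) q hinterior
      _ ≤ (Smat G ^ (q.cons hadj).length) i j :=
          mul_pow_apply_le_pow_succ_apply (Smat_nonneg_s17 G) _ i v j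

end Smat

theorem stmt17_general {n : ℕ} (G : SimpleGraph (Fin n)) [DecidableRel G.Adj]
    {Ω : Type*} [MeasurableSpace Ω] (μ : MeasureTheory.Measure Ω)
    (ε : Fin n → Ω → ℝ)
    (hint2 : ∀ i j : Fin n, MeasureTheory.Integrable (fun ω => ε i ω * ε j ω) μ)
    (hcov : ∀ i j : Fin n, ∫ ω, ε i ω * ε j ω ∂μ = if i = j then 1 else 0)
    (L : ℕ) (hL : 1 ≤ L) (i j : Fin n) (d : ℕ) (hd : G.degree i = d)
    (p : G.Walk i j) (hpath : p.IsPath) (hlen : p.length = L)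
    (hdeg : ∀ v ∈ p.support, v ≠ i → v ≠ j → G.degree v ≤ 3) :
    ((d : ℝ) + 1) ^ (-2 : ℤ) * (4 : ℝ) ^ (2 - 2 * (L : ℤ))
      ≤ ∫ ω, ((Smat G ^ L).mulVec (fun k => ε k ω) i) ^ 2 ∂μ := by
  subst hd hlen
  have hbound := Smat_pow_apply_ge_of_path G p hpath hL hdeg
  have hlhs : ((G.degree i : ℝ) + 1) ^ (-2 : ℤ) * (4 : ℝ) ^ (2 - 2 * (p.length : ℤ))
      = (1 / ((G.degree i : ℝ) + 1) * (1 / 4) ^ (p.length - 1)) ^ 2 := by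
    rw [mul_pow, ← pow_mul, one_div, one_div, inv_pow, inv_pow, ← zpow_natCast,
      ← zpow_natCast (4 : ℝ), ← _root_.zpow_neg, ← _root_.zpow_neg]
    congr 2
    omega
  calc ((G.degree i : ℝ) + 1) ^ (-2 : ℤ) * (4 : ℝ) ^ (2 - 2 * (p.length : ℤ))
      ≤ (Smat G ^ p.length) i j ^ 2 := hlhs ▸ pow_le_pow_left₀ (by positivity) hbound 2
    _ ≤ ∑ k, (Smat G ^ p.length) i k ^ 2 :=
        Finset.single_le_sum (f := fun k => (Smat G ^ p.length) i k ^ 2)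
          (fun k _ => sq_nonneg _) (Finset.mem_univ j)
    _ = ∫ ω, ((Smat G ^ p.length).mulVec (fun k => ε k ω) i) ^ 2 ∂μ :=
        (integral_dotProduct_sq_of_orthonormal hint2 hcov _).symm

/-- If there is a path of length `L` from `i` (of degree `d`) to `j` whose interior
vertices all have degree at most 3, then `E[(S^L ε)ᵢ²] ≥ (d+1)⁻²·4^{2−2L}`
(Proposition 2). -/
theorem stmt17 {n : ℕ} (G : SimpleGraph (Fin n)) [DecidableRel G.Adj]
    {Ω : Type*} [MeasurableSpace Ω] (μ : MeasureTheory.Measure Ω)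
    [MeasureTheory.IsProbabilityMeasure μ] (ε : Fin n → Ω → ℝ)
    (hint : ∀ i : Fin n, MeasureTheory.Integrable (ε i) μ)
    (hint2 : ∀ i j : Fin n, MeasureTheory.Integrable (fun ω => ε i ω * ε j ω) μ)
    (hmean : ∀ i : Fin n, ∫ ω, ε i ω ∂μ = 0)
    (hcov : ∀ i j : Fin n, ∫ ω, ε i ω * ε j ω ∂μ = if i = j then 1 else 0)
    (L : ℕ) (hL : 1 ≤ L) (i j : Fin n) (d : ℕ) (hd : G.degree i = d)
    (p : G.Walk i j) (hpath : p.IsPath) (hlen : p.length = L)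
    (hdeg : ∀ v ∈ p.support, v ≠ i → v ≠ j → G.degree v ≤ 3) :
    ((d : ℝ) + 1) ^ (-2 : ℤ) * (4 : ℝ) ^ (2 - 2 * (L : ℤ))
      ≤ ∫ ω, ((Smat G ^ L).mulVec (fun k => ε k ω) i) ^ 2 ∂μ :=
  stmt17_general G μ ε hint2 hcov L hL i j d hd p hpath hlen hdeg
end

section
/- Suppose the graph is the union of a cycle C of length r ≥ 2 and a graph H, sharing exactly one vertex i = C ∩ H, with no edges between C∖{i} and H∖{i}. Then for every L ≥ 1, E[(S^L ε)_i^2] ≥ (3/((d_i+1)(r−1)))^2 · 1.5^{−2L}. -/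
open Matrix MeasureTheory

lemma smat_nonneg {n : ℕ} (G : SimpleGraph (Fin n)) [DecidableRel G.Adj] (v w : Fin n) :
    0 ≤ Smat G v w := by
  unfold Smat
  simp only [Matrix.of_apply, Matrix.add_apply, SimpleGraph.adjMatrix_apply, Matrix.one_apply]
  positivity

lemma smat_rowsum {n : ℕ} (G : SimpleGraph (Fin n)) [DecidableRel G.Adj] (v : Fin n) :
    ∑ w, Smat G v w = 1 := by
  have hd : ((G.degree v : ℝ) + 1) ≠ 0 := by positivity
  simp only [Smat, Matrix.of_apply]
  rw [← Finset.sum_div, div_eq_one_iff_eq hd]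
  simp [Matrix.add_apply, Matrix.one_apply, Finset.sum_add_distrib, SimpleGraph.adjMatrix_apply,
    Finset.sum_ite_eq', SimpleGraph.degree, SimpleGraph.neighborFinset]

lemma smat_eq_zero {n : ℕ} (G : SimpleGraph (Fin n)) [DecidableRel G.Adj] {v w : Fin n}
    (h1 : ¬ G.Adj v w) (h2 : v ≠ w) : Smat G v w = 0 := by
  simp [Smat, Matrix.add_apply, Matrix.one_apply, h1, h2]

lemma smat_adj {n : ℕ} (G : SimpleGraph (Fin n)) [DecidableRel G.Adj] {v w : Fin n}
    (h1 : G.Adj v w) : Smat G v w = 1 / ((G.degree v : ℝ) + 1) := by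
  simp [Smat, Matrix.add_apply, Matrix.one_apply, h1, G.ne_of_adj h1]
lemma smat_pow_nonneg {n : ℕ} (G : SimpleGraph (Fin n)) [DecidableRel G.Adj] (t : ℕ)
    (v w : Fin n) : 0 ≤ (Smat G ^ t) v w := by
  induction t generalizing v w with
  | zero => simp [Matrix.one_apply]; positivity
  | succ t ih =>
      rw [pow_succ, Matrix.mul_apply]
      refine Finset.sum_nonneg fun k _ => mul_nonneg (ih v k) ?_
      simp only [Smat, Matrix.of_apply, Matrix.add_apply, SimpleGraph.adjMatrix_apply,
        Matrix.one_apply]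
      positivity

lemma integral_sq_sum {n : ℕ} {Ω : Type*} [MeasurableSpace Ω] (μ : MeasureTheory.Measure Ω)
    (ε : Fin n → Ω → ℝ)
    (hint2 : ∀ i j : Fin n, MeasureTheory.Integrable (fun ω => ε i ω * ε j ω) μ)
    (hcov : ∀ i j : Fin n, ∫ ω, ε i ω * ε j ω ∂μ = if i = j then 1 else 0)
    (a : Fin n → ℝ) :
    ∫ ω, (∑ j, a j * ε j ω) ^ 2 ∂μ = ∑ j, (a j) ^ 2 := by
  have hexp : ∀ ω, (∑ j, a j * ε j ω) ^ 2
      = ∑ j, ∑ k, (a j * a k) * (ε j ω * ε k ω) := by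
    intro ω
    rw [sq, Finset.sum_mul_sum]
    congr 1; ext j; congr 1; ext k; ring
  simp only [hexp]
  rw [integral_finset_sum _ (fun j _ => integrable_finset_sum _
    (fun k _ => ((hint2 j k).const_mul _)))]
  congr 1; ext j
  rw [integral_finset_sum _ (fun k _ => ((hint2 j k).const_mul _))]
  have : ∀ k : Fin n, ∫ ω, (a j * a k) * (ε j ω * ε k ω) ∂μ
      = if j = k then a j * a k else 0 := by
    intro k
    rw [MeasureTheory.integral_const_mul, hcov]
    split <;> simp
  simp only [this, Finset.sum_ite_eq, Finset.mem_univ, if_true, sq]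

lemma path_getVert_injOn {V : Type*} {G : SimpleGraph V} {u v : V} (p : G.Walk u v)
    (hp : p.IsPath) : ∀ a ≤ p.length, ∀ b ≤ p.length, p.getVert a = p.getVert b → a = b := by
  induction p with
  | nil => intro a ha b hb _; simp at ha hb; omega
  | cons h q ih =>
      rw [SimpleGraph.Walk.cons_isPath_iff] at hp
      intro a ha b hb hab
      match a, b with
      | 0, 0 => rfl
      | 0, Nat.succ b =>
          exfalso
          apply hp.2
          rw [SimpleGraph.Walk.mem_support_iff_exists_getVert]
          refine ⟨b, ?_, ?_⟩
          · simpa [SimpleGraph.Walk.getVert_cons_succ] using hab.symm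
          · simpa [SimpleGraph.Walk.length_cons] using hb
      | Nat.succ a, 0 =>
          exfalso
          apply hp.2
          rw [SimpleGraph.Walk.mem_support_iff_exists_getVert]
          refine ⟨a, ?_, ?_⟩
          · simpa [SimpleGraph.Walk.getVert_cons_succ] using hab
          · simpa [SimpleGraph.Walk.length_cons] using ha
      | Nat.succ a, Nat.succ b =>
          have := ih hp.1 a (by simpa [SimpleGraph.Walk.length_cons] using ha)
            b (by simpa [SimpleGraph.Walk.length_cons] using hb)
            (by simpa [SimpleGraph.Walk.getVert_cons_succ] using hab)
          omega

lemma cycle_getVert_injOn {V : Type*} {G : SimpleGraph V} {i : V} {c : G.Walk i i}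
    (hc : c.IsCycle) : ∀ a, 1 ≤ a → a ≤ c.length → ∀ b, 1 ≤ b → b ≤ c.length →
      c.getVert a = c.getVert b → a = b := by
  cases c with
  | nil => exact absurd rfl hc.ne_nil
  | @cons _ x _ h p =>
      have hp : p.IsPath := ((SimpleGraph.Walk.cons_isCycle_iff p h).mp hc).1
      intro a ha1 ha2 b hb1 hb2 hab
      obtain ⟨a', rfl⟩ : ∃ a', a = a' + 1 := ⟨a - 1, by omega⟩
      obtain ⟨b', rfl⟩ : ∃ b', b = b' + 1 := ⟨b - 1, by omega⟩
      simp only [SimpleGraph.Walk.getVert_cons_succ] at hab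
      simp only [SimpleGraph.Walk.length_cons] at ha2 hb2
      have := path_getVert_injOn p hp a' (by omega) b' (by omega) hab
      omega

lemma cycle_two_le_degree {n : ℕ} {G : SimpleGraph (Fin n)} [DecidableRel G.Adj] {i : Fin n}
    {c : G.Walk i i} (hc : c.IsCycle) {v : Fin n} (hv : v ∈ c.support) (hvi : v ≠ i) :
    2 ≤ G.degree v := by
  have hr3 : 3 ≤ c.length := hc.three_le_length
  obtain ⟨k, hk, hkle⟩ := SimpleGraph.Walk.mem_support_iff_exists_getVert.mp hv
  have hk1 : 1 ≤ k := by
    rcases Nat.eq_zero_or_pos k with h | h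
    · subst h; rw [SimpleGraph.Walk.getVert_zero] at hk; exact absurd hk.symm hvi
    · exact h
  have hkr : k ≤ c.length - 1 := by
    rcases Nat.lt_or_ge k c.length with h | h
    · omega
    · exfalso; rw [SimpleGraph.Walk.getVert_of_length_le c h] at hk; exact hvi hk.symm
  -- the two neighbors
  have hadj1 : G.Adj (c.getVert (k-1)) v := by
    have := c.adj_getVert_succ (i := k-1) (by omega)
    rwa [show k - 1 + 1 = k by omega, hk] at this
  have hadj2 : G.Adj v (c.getVert (k+1)) := by
    have := c.adj_getVert_succ (i := k) (by omega)
    rwa [hk] at this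
  have hne : c.getVert (k-1) ≠ c.getVert (k+1) := by
    rcases Nat.eq_or_lt_of_le hk1 with h1 | h1
    · -- k = 1
      have hk0 : c.getVert (k-1) = c.getVert c.length := by
        rw [show k - 1 = 0 by omega, SimpleGraph.Walk.getVert_zero,
          SimpleGraph.Walk.getVert_length]
      rw [hk0]
      intro hcon
      have := cycle_getVert_injOn hc c.length (by omega) le_rfl (k+1) (by omega) (by omega) hcon
      omega
    · intro hcon
      have := cycle_getVert_injOn hc (k-1) (by omega) (by omega) (k+1) (by omega) (by omega) hcon
      omega
  rw [← SimpleGraph.card_neighborFinset_eq_degree]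
  rw [show (2:ℕ) = 1 + 1 from rfl]
  refine Nat.succ_le_of_lt (Finset.one_lt_card.mpr ?_)
  exact ⟨c.getVert (k-1), by simp [SimpleGraph.mem_neighborFinset, hadj1.symm],
    c.getVert (k+1), by simp [SimpleGraph.mem_neighborFinset, hadj2], hne⟩

lemma cycle_two_nbrs {n : ℕ} {G : SimpleGraph (Fin n)} [DecidableRel G.Adj] {i : Fin n}
    {c : G.Walk i i} (hc : c.IsCycle) :
    ∃ a b : Fin n, a ≠ b ∧ G.Adj i a ∧ G.Adj i b ∧ a ∈ c.support ∧ b ∈ c.support := by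
  have hr3 : 3 ≤ c.length := hc.three_le_length
  refine ⟨c.getVert 1, c.getVert (c.length - 1), ?_, ?_, ?_, ?_, ?_⟩
  · intro hcon
    have := cycle_getVert_injOn hc 1 le_rfl (by omega) (c.length - 1) (by omega) (by omega) hcon
    omega
  · have := c.adj_getVert_succ (i := 0) (by omega)
    rwa [SimpleGraph.Walk.getVert_zero, zero_add] at this
  · have := c.adj_getVert_succ (i := c.length - 1) (by omega)
    rw [show c.length - 1 + 1 = c.length by omega, SimpleGraph.Walk.getVert_length] at this
    exact this.symm
  · exact SimpleGraph.Walk.mem_support_iff_exists_getVert.mpr ⟨1, rfl, by omega⟩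
  · exact SimpleGraph.Walk.mem_support_iff_exists_getVert.mpr ⟨c.length - 1, rfl, by omega⟩


/-- If the graph decomposes into a cycle `C` of length `r` through `i` and a graph `H`,
sharing exactly the vertex `i` and with no edges between `C∖{i}` and `H∖{i}`
(so every vertex of the cycle other than `i` has all its neighbors on the cycle),
then `E[(S^L ε)ᵢ²] ≥ (3/((dᵢ+1)(r−1)))²·1.5^{−2L}` (Proposition 3). -/
theorem stmt18 {n : ℕ} (G : SimpleGraph (Fin n)) [DecidableRel G.Adj]
    {Ω : Type*} [MeasurableSpace Ω] (μ : MeasureTheory.Measure Ω)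
    [MeasureTheory.IsProbabilityMeasure μ] (ε : Fin n → Ω → ℝ)
    (hint : ∀ i : Fin n, MeasureTheory.Integrable (ε i) μ)
    (hint2 : ∀ i j : Fin n, MeasureTheory.Integrable (fun ω => ε i ω * ε j ω) μ)
    (hmean : ∀ i : Fin n, ∫ ω, ε i ω ∂μ = 0)
    (hcov : ∀ i j : Fin n, ∫ ω, ε i ω * ε j ω ∂μ = if i = j then 1 else 0)
    (r : ℕ) (hr : 2 ≤ r) (i : Fin n)
    (c : G.Walk i i) (hcyc : c.IsCycle) (hclen : c.length = r)
    (hsep : ∀ v ∈ c.support, v ≠ i → ∀ w : Fin n, G.Adj v w → w ∈ c.support)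
    (L : ℕ) (hL : 1 ≤ L) :
    (3 / (((G.degree i : ℝ) + 1) * ((r : ℝ) - 1))) ^ 2 * (1.5 : ℝ) ^ (-2 * (L : ℤ))
      ≤ ∫ ω, ((Smat G ^ L).mulVec (fun k => ε k ω) i) ^ 2 ∂μ := by
  classical
  set S := Smat G with hS
  set d : ℝ := (G.degree i : ℝ) with hd
  have hd0 : (0:ℝ) < d + 1 := by positivity
  have hr3 : 3 ≤ r := hclen ▸ hcyc.three_le_length
  set U : Finset (Fin n) := c.support.toFinset.erase i with hU
  have hUmem : ∀ j, j ∈ U ↔ j ∈ c.support ∧ j ≠ i := by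
    intro j
    simp [hU, Finset.mem_erase, List.mem_toFinset, and_comm]
  -- card bound
  have hUcard : (U.card : ℝ) ≤ (r : ℝ) - 1 := by
    have hcard : c.support.toFinset.card ≤ r := by
      cases c with
      | nil => simp at hclen; omega
      | @cons _ x _ h p =>
          have : (SimpleGraph.Walk.cons h p).support.toFinset = p.support.toFinset := by
            rw [SimpleGraph.Walk.support_cons, List.toFinset_cons,
              Finset.insert_eq_self.mpr (by simp [p.end_mem_support])]
          rw [this]
          have := p.support.toFinset_card_le
          have hlen : p.support.length = p.length + 1 := p.length_support
          have : p.support.toFinset.card ≤ p.length + 1 := by omega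
          simpa [SimpleGraph.Walk.length_cons] using hclen ▸ this
    have hiT : i ∈ c.support.toFinset := by simp [c.start_mem_support]
    have : U.card = c.support.toFinset.card - 1 := by
      rw [hU, Finset.card_erase_of_mem hiT]
    have h1 : 1 ≤ c.support.toFinset.card := Finset.card_pos.mpr ⟨i, hiT⟩
    have : U.card + 1 ≤ r := by omega
    have := Nat.cast_le (α := ℝ) |>.mpr this
    push_cast at this
    linarith
  -- two distinct neighbors of i on the cycle
  obtain ⟨a, b, hab, hia, hib, haS, hbS⟩ := cycle_two_nbrs hcyc
  have haU : a ∈ U := (hUmem a).mpr ⟨haS, (G.ne_of_adj hia).symm⟩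
  have hbU : b ∈ U := (hUmem b).mpr ⟨hbS, (G.ne_of_adj hib).symm⟩
  -- row bound
  have hrow : ∀ k ∈ U, (2:ℝ)/3 ≤ ∑ j ∈ U, S k j := by
    intro k hk
    obtain ⟨hks, hki⟩ := (hUmem k).mp hk
    have h1 : ∑ j ∈ U, S k j + ∑ j ∈ Uᶜ, S k j = 1 := by
      rw [Finset.sum_add_sum_compl]; exact smat_rowsum G k
    have h2 : ∑ j ∈ Uᶜ, S k j = S k i := by
      refine Finset.sum_eq_single_of_mem i (by simp [hU]) ?_
      intro j hj hji
      have hjS : j ∉ c.support := by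
        intro hjs
        exact (Finset.mem_compl.mp hj) ((hUmem j).mpr ⟨hjs, hji⟩)
      refine smat_eq_zero G ?_ ?_
      · intro hadj; exact hjS (hsep k hks hki j hadj)
      · intro hkj; exact hjS (hkj ▸ hks)
    have h3 : S k i ≤ 1/3 := by
      by_cases hadj : G.Adj k i
      · rw [hS, smat_adj G hadj]
        have h2d : 2 ≤ G.degree k := cycle_two_le_degree hcyc hks hki
        have : (3:ℝ) ≤ (G.degree k : ℝ) + 1 := by
          have := Nat.cast_le (α := ℝ) |>.mpr h2d; push_cast at this ⊢; linarith
        rw [div_le_div_iff₀ (by positivity) (by norm_num)]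
        linarith
      · rw [hS, smat_eq_zero G hadj hki]; norm_num
    linarith
  -- the restricted matrix and initial vector
  set M : Matrix (Fin n) (Fin n) ℝ :=
    Matrix.of (fun v w => if v ∈ U ∧ w ∈ U then S v w else 0) with hM
  set q1 : Fin n → ℝ := fun j => if j ∈ U then S i j else 0 with hq1
  set q : ℕ → Fin n → ℝ := fun t => q1 ᵥ* (M ^ t) with hq
  have hMnonneg : ∀ v w, 0 ≤ M v w := by
    intro v w; rw [hM]; simp only [Matrix.of_apply]
    split
    · exact smat_nonneg G v w
    · exact le_rfl
  have hMle : ∀ v w, M v w ≤ S v w := by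
    intro v w; rw [hM]; simp only [Matrix.of_apply]
    split
    · exact le_rfl
    · exact smat_nonneg G v w
  have hqsucc : ∀ t j, q (t+1) j = ∑ k, q t k * M k j := by
    intro t j
    rw [hq]
    simp only [pow_succ, ← Matrix.vecMul_vecMul]
    rfl
  have key : ∀ t, (∀ j, 0 ≤ q t j) ∧ (∀ j, j ∉ U → q t j = 0) ∧
      (∀ j, q t j ≤ (S ^ (t+1)) i j) ∧ ((2/3 : ℝ)^t * (2/(d+1)) ≤ ∑ j, q t j) := by
    intro t
    induction t with
    | zero =>
        have hq0 : q 0 = q1 := by rw [hq]; simp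
        rw [hq0]
        refine ⟨?_, ?_, ?_, ?_⟩
        · intro j; rw [hq1]; dsimp only; split
          · exact smat_nonneg G i j
          · exact le_rfl
        · intro j hj; rw [hq1]; simp [hj]
        · intro j; rw [hq1, pow_one]; dsimp only; split
          · exact le_rfl
          · exact smat_nonneg G i j
        · have hnn : ∀ j : Fin n, 0 ≤ q1 j := by
            intro j; rw [hq1]; dsimp only; split
            · exact smat_nonneg G i j
            · exact le_rfl
          have hsum : q1 a + q1 b ≤ ∑ j, q1 j := by
            have h := Finset.sum_le_sum_of_subset_of_nonneg
              (Finset.subset_univ ({a, b} : Finset (Fin n))) (fun j _ _ => hnn j)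
            rwa [Finset.sum_pair hab] at h
          have hqa : q1 a = 1/(d+1) := by
            rw [hq1]; simp only [haU, if_true]; rw [hS, smat_adj G hia]
          have hqb : q1 b = 1/(d+1) := by
            rw [hq1]; simp only [hbU, if_true]; rw [hS, smat_adj G hib]
          rw [pow_zero, one_mul]
          rw [hqa, hqb] at hsum
          have : 2/(d+1) = 1/(d+1) + 1/(d+1) := by ring
          linarith
    | succ t ih =>
        obtain ⟨ih1, ih2, ih3, ih4⟩ := ih
        refine ⟨?_, ?_, ?_, ?_⟩
        · intro j; rw [hqsucc]
          exact Finset.sum_nonneg fun k _ => mul_nonneg (ih1 k) (hMnonneg k j)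
        · intro j hj; rw [hqsucc]
          refine Finset.sum_eq_zero fun k _ => ?_
          have : M k j = 0 := by
            rw [hM]; simp only [Matrix.of_apply]
            rw [if_neg]; intro ⟨_, h⟩; exact hj h
          rw [this, mul_zero]
        · intro j
          rw [hqsucc]
          calc ∑ k, q t k * M k j ≤ ∑ k, (S ^ (t+1)) i k * S k j := by
                refine Finset.sum_le_sum fun k _ => ?_
                exact mul_le_mul (ih3 k) (hMle k j) (hMnonneg k j) (smat_pow_nonneg G _ i k)
            _ = (S ^ (t+1+1)) i j := by conv_rhs => rw [pow_succ, Matrix.mul_apply]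
        · have hstep : ∀ k, (2/3 : ℝ) * q t k ≤ q t k * (∑ j, M k j) := by
            intro k
            by_cases hk : k ∈ U
            · have hMsum : ∑ j, M k j = ∑ j ∈ U, S k j := by
                rw [hM]
                simp only [Matrix.of_apply, hk, true_and]
                rw [Finset.sum_ite_mem, Finset.univ_inter]
              rw [hMsum, mul_comm (q t k)]
              exact mul_le_mul_of_nonneg_right (hrow k hk) (ih1 k)
            · rw [ih2 k hk]; simp
          calc ((2:ℝ)/3)^(t+1) * (2/(d+1)) = (2/3) * ((2/3)^t * (2/(d+1))) := by ring
            _ ≤ (2/3) * ∑ j, q t j := by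
                exact mul_le_mul_of_nonneg_left ih4 (by norm_num)
            _ = ∑ k, (2/3 : ℝ) * q t k := by rw [Finset.mul_sum]
            _ ≤ ∑ k, q t k * (∑ j, M k j) := Finset.sum_le_sum fun k _ => hstep k
            _ = ∑ k, ∑ j, q t k * M k j := by
                refine Finset.sum_congr rfl fun k _ => ?_; rw [Finset.mul_sum]
            _ = ∑ j, ∑ k, q t k * M k j := Finset.sum_comm
            _ = ∑ j, q (t+1) j := by
                refine Finset.sum_congr rfl fun j _ => (hqsucc t j).symm
  -- pigeonhole
  obtain ⟨m, rfl⟩ : ∃ m, L = m + 1 := ⟨L - 1, by omega⟩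
  obtain ⟨k1, k2, k3, k4⟩ := key m
  obtain ⟨j, hjU, hjmax⟩ := U.exists_max_image (q m) ⟨a, haU⟩
  have hsumU : ∑ x, q m x = ∑ x ∈ U, q m x := by
    rw [← Finset.sum_subset (Finset.subset_univ U)]
    intro x _ hx; exact k2 x hx
  have hcardb : ∑ x ∈ U, q m x ≤ (U.card : ℝ) * q m j := by
    have := Finset.sum_le_card_nsmul U (q m) (q m j) (fun x hx => hjmax x hx)
    simpa [nsmul_eq_mul] using this
  have hqj0 : 0 ≤ q m j := k1 j
  have hchain : (2/3 : ℝ)^m * (2/(d+1)) ≤ ((r:ℝ) - 1) * q m j := by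
    calc (2/3 : ℝ)^m * (2/(d+1)) ≤ ∑ x, q m x := k4
      _ = ∑ x ∈ U, q m x := hsumU
      _ ≤ (U.card : ℝ) * q m j := hcardb
      _ ≤ ((r:ℝ) - 1) * q m j := mul_le_mul_of_nonneg_right hUcard hqj0
  have hr1 : (0:ℝ) < (r:ℝ) - 1 := by
    have : (2:ℝ) ≤ (r:ℝ) := by exact_mod_cast hr
    linarith
  set B : ℝ := (2/3 : ℝ)^m * (2/(d+1)) / ((r:ℝ) - 1) with hB
  have hBpos : 0 < B := by
    rw [hB]; positivity
  have hBj : B ≤ (S ^ (m+1)) i j := by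
    have h1 : B ≤ q m j := by
      rw [hB, div_le_iff₀ hr1, mul_comm (q m j)]
      linarith [hchain]
    exact le_trans h1 (k3 j)
  -- integral identity
  have hints : ∫ ω, ((S ^ (m+1)).mulVec (fun k => ε k ω) i) ^ 2 ∂μ
      = ∑ k, ((S ^ (m+1)) i k)^2 := by
    have : ∀ ω, (S ^ (m+1)).mulVec (fun k => ε k ω) i = ∑ k, (S ^ (m+1)) i k * ε k ω := by
      intro ω; simp [Matrix.mulVec, dotProduct]
    simp only [this]
    exact integral_sq_sum μ ε hint2 hcov _
  rw [hints]
  have hfin : B^2 ≤ ∑ k, ((S ^ (m+1)) i k)^2 := by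
    calc B^2 ≤ ((S ^ (m+1)) i j)^2 := by
          exact pow_le_pow_left₀ hBpos.le hBj 2
      _ ≤ ∑ k, ((S ^ (m+1)) i k)^2 := by
          exact Finset.single_le_sum (f := fun k => ((S ^ (m+1)) i k)^2)
            (fun k _ => sq_nonneg _) (Finset.mem_univ j)
  refine le_trans (le_of_eq ?_) hfin
  -- arithmetic
  rw [hB]
  have h15 : (1.5 : ℝ) ^ (-2 * ((m+1 : ℕ) : ℤ)) = ((2:ℝ)/3) ^ (2*(m+1)) := by
    have : (-2 * ((m+1 : ℕ) : ℤ)) = -(((2*(m+1) : ℕ)) : ℤ) := by push_cast; ring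
    rw [this, _root_.zpow_neg, zpow_natCast]
    rw [← inv_pow]
    norm_num
  rw [h15]
  have hexp : ((2:ℝ)/3) ^ (2*(m+1)) = ((2:ℝ)/3)^m * ((2:ℝ)/3)^m * (4/9) := by
    rw [show 2*(m+1) = m + m + 2 by ring, pow_add, pow_add]
    ring
  rw [hexp]
  field_simp
  ring
end

section
/- Suppose there is a path i = v_0, v_1, …, v_{L-1}, v_L = j in the graph with deg(v_0) = d and deg(v_k) ≤ 3 for 1 ≤ k ≤ L−1. Then for T = D̃^{-1/2}ÃD̃^{-1/2}, E[(T^L ε)_i^2] ≥ 4^{2−2L}/((d+1)(d_j+1)), where d_j is the degree of vertex j. -/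
open Matrix MeasureTheory

/-- The symmetrically normalized adjacency matrix with self-loops `T = D̃^{-1/2}ÃD̃^{-1/2}`. -/
noncomputable def Tmat {n : ℕ} (G : SimpleGraph (Fin n)) [DecidableRel G.Adj] :
    Matrix (Fin n) (Fin n) ℝ :=
  Matrix.of fun i j =>
    ((G.adjMatrix ℝ + 1) i j) / (Real.sqrt ((G.degree i : ℝ) + 1) * Real.sqrt ((G.degree j : ℝ) + 1))

lemma Tmat_nonneg {n : ℕ} (G : SimpleGraph (Fin n)) [DecidableRel G.Adj] (u v : Fin n) :
    0 ≤ Tmat G u v := by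
  unfold Tmat
  simp only [Matrix.of_apply, Matrix.add_apply, SimpleGraph.adjMatrix_apply, Matrix.one_apply]
  apply div_nonneg
  · split_ifs <;> norm_num
  · positivity

lemma Tpow_nonneg {n : ℕ} (G : SimpleGraph (Fin n)) [DecidableRel G.Adj] (L : ℕ) (u v : Fin n) :
    0 ≤ (Tmat G ^ L) u v := by
  induction L generalizing u v with
  | zero => simp [Matrix.one_apply]; split_ifs <;> norm_num
  | succ m ih =>
    rw [pow_succ, Matrix.mul_apply]
    exact Finset.sum_nonneg fun k _ => mul_nonneg (ih u k) (Tmat_nonneg G k v)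

lemma Tmat_adj {n : ℕ} (G : SimpleGraph (Fin n)) [DecidableRel G.Adj] {u v : Fin n}
    (h : G.Adj u v) :
    Tmat G u v = 1 / (Real.sqrt ((G.degree u : ℝ) + 1) * Real.sqrt ((G.degree v : ℝ) + 1)) := by
  unfold Tmat
  simp [Matrix.one_apply, h, G.ne_of_adj h]

lemma key_walk {n : ℕ} (G : SimpleGraph (Fin n)) [DecidableRel G.Adj] :
    ∀ {a b : Fin n} (p : G.Walk a b), p.IsPath →
    (∀ v ∈ p.support, v ≠ a → v ≠ b → G.degree v ≤ 3) → 1 ≤ p.length →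
    1 / ((4:ℝ) ^ (p.length - 1) *
        (Real.sqrt ((G.degree a : ℝ) + 1) * Real.sqrt ((G.degree b : ℝ) + 1)))
      ≤ (Tmat G ^ p.length) a b := by
  intro a b p
  induction p with
  | nil => intro _ _ h; simp at h
  | @cons a c b h q ih =>
    intro hp hdeg _
    have hsa : (0:ℝ) < Real.sqrt ((G.degree a : ℝ) + 1) := Real.sqrt_pos.2 (by positivity)
    have hsb : (0:ℝ) < Real.sqrt ((G.degree b : ℝ) + 1) := Real.sqrt_pos.2 (by positivity)
    have hsc : (0:ℝ) < Real.sqrt ((G.degree c : ℝ) + 1) := Real.sqrt_pos.2 (by positivity)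
    have hqpath : q.IsPath := hp.of_cons
    have hanotin : a ∉ q.support := (SimpleGraph.Walk.cons_isPath_iff h q).1 hp |>.2
    cases q with
    | nil =>
      -- c = b, length 1
      simp only [SimpleGraph.Walk.length_cons, SimpleGraph.Walk.length_nil]
      rw [pow_one, Tmat_adj G h]
      simp
    | @cons c c' b h' q' =>
      set q : G.Walk c b := SimpleGraph.Walk.cons h' q' with hq
      have hqlen : 1 ≤ q.length := by simp [hq]
      have hcb : c ≠ b := by
        have hnd := hqpath.support_nodup
        have : c ∉ q'.support := by
          simpa [hq] using (List.nodup_cons.1 (by simpa [hq] using hnd)).1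
        intro hcb; exact this (hcb ▸ q'.end_mem_support)
      have hdc : G.degree c ≤ 3 := by
        apply hdeg c (by simp)
        · intro hca; exact hanotin (hca ▸ q.start_mem_support)
        · exact hcb
      have ihq := ih hqpath (fun v hv hvc hvb => by
        apply hdeg v (by simp [hv]) _ hvb
        intro hva; exact hanotin (hva ▸ hv)) hqlen
      -- (T^(len q + 1)) a b = ∑ k, T a k * (T^len q) k b ≥ T a c * (T^len q) c b
      have hstep : Tmat G a c * (Tmat G ^ q.length) c b ≤ (Tmat G ^ (q.length + 1)) a b := by
        rw [pow_succ', Matrix.mul_apply]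
        exact Finset.single_le_sum
          (fun k _ => mul_nonneg (Tmat_nonneg G a k) (Tpow_nonneg G _ k b))
          (Finset.mem_univ c)
      have hlenc : (SimpleGraph.Walk.cons h q).length = q.length + 1 := by simp
      rw [hlenc]
      refine le_trans ?_ hstep
      have h2 : 1 / (Real.sqrt ((G.degree a : ℝ) + 1) * Real.sqrt ((G.degree c : ℝ) + 1)) *
          (1 / ((4:ℝ) ^ (q.length - 1) *
            (Real.sqrt ((G.degree c : ℝ) + 1) * Real.sqrt ((G.degree b : ℝ) + 1))))
          ≤ Tmat G a c * (Tmat G ^ q.length) c b := by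
        rw [Tmat_adj G h]
        apply mul_le_mul_of_nonneg_left ihq (by positivity)
      refine le_trans ?_ h2
      rw [div_mul_div_comm, one_mul]
      apply one_div_le_one_div_of_le (by positivity)
      have hq1 : q.length - 1 + 1 = q.length := Nat.succ_pred_eq_of_pos hqlen
      have hcsq : Real.sqrt ((G.degree c : ℝ) + 1) ^ 2 = (G.degree c : ℝ) + 1 :=
        Real.sq_sqrt (by positivity)
      have hc4 : Real.sqrt ((G.degree c : ℝ) + 1) ^ 2 ≤ 4 := by
        rw [hcsq]
        have : (G.degree c : ℝ) ≤ 3 := by exact_mod_cast hdc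
        linarith
      have : Real.sqrt ((G.degree a : ℝ) + 1) * Real.sqrt ((G.degree c : ℝ) + 1) *
          ((4:ℝ) ^ (q.length - 1) *
            (Real.sqrt ((G.degree c : ℝ) + 1) * Real.sqrt ((G.degree b : ℝ) + 1)))
          = ((4:ℝ) ^ (q.length - 1) * Real.sqrt ((G.degree c : ℝ) + 1) ^ 2) *
            (Real.sqrt ((G.degree a : ℝ) + 1) * Real.sqrt ((G.degree b : ℝ) + 1)) := by ring
      rw [this]
      simp only [Nat.add_sub_cancel]
      have h4 : (4:ℝ) ^ q.length = (4:ℝ) ^ (q.length - 1) * 4 := by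
        rw [← pow_succ, hq1]
      rw [h4]
      apply mul_le_mul_of_nonneg_right _ (by positivity)
      exact mul_le_mul_of_nonneg_left hc4 (by positivity)

lemma integral_sq_mulVec {n : ℕ} (A : Matrix (Fin n) (Fin n) ℝ)
    {Ω : Type*} [MeasurableSpace Ω] (μ : MeasureTheory.Measure Ω) (ε : Fin n → Ω → ℝ)
    (hint2 : ∀ i j : Fin n, MeasureTheory.Integrable (fun ω => ε i ω * ε j ω) μ)
    (hcov : ∀ i j : Fin n, ∫ ω, ε i ω * ε j ω ∂μ = if i = j then 1 else 0)
    (i : Fin n) :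
    ∫ ω, (A.mulVec (fun k => ε k ω) i) ^ 2 ∂μ = ∑ k, (A i k) ^ 2 := by
  have hpt : ∀ ω, (A.mulVec (fun k => ε k ω) i) ^ 2
      = ∑ k, ∑ l, (A i k * A i l) * (ε k ω * ε l ω) := by
    intro ω
    simp only [Matrix.mulVec, dotProduct, sq]
    rw [Finset.sum_mul_sum]
    exact Finset.sum_congr rfl fun k _ => Finset.sum_congr rfl fun l _ => by ring
  simp only [hpt]
  rw [integral_finset_sum _ (fun k _ => integrable_finset_sum _
    (fun l _ => (hint2 k l).const_mul _))]
  rw [Finset.sum_congr rfl (fun k _ => integral_finset_sum _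
    (fun l _ => (hint2 k l).const_mul _))]
  simp only [integral_const_mul, hcov, mul_ite, mul_one, mul_zero]
  simp [sq]

/-- If there is a path of length `L` from `i` (of degree `d`) to `j` whose interior
vertices all have degree at most 3, then `E[(T^L ε)ᵢ²] ≥ 4^{2−2L}/((d+1)(dⱼ+1))`
(Proposition 2'). -/
theorem stmt19 {n : ℕ} (G : SimpleGraph (Fin n)) [DecidableRel G.Adj]
    {Ω : Type*} [MeasurableSpace Ω] (μ : MeasureTheory.Measure Ω)
    [MeasureTheory.IsProbabilityMeasure μ] (ε : Fin n → Ω → ℝ)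
    (hint : ∀ i : Fin n, MeasureTheory.Integrable (ε i) μ)
    (hint2 : ∀ i j : Fin n, MeasureTheory.Integrable (fun ω => ε i ω * ε j ω) μ)
    (hmean : ∀ i : Fin n, ∫ ω, ε i ω ∂μ = 0)
    (hcov : ∀ i j : Fin n, ∫ ω, ε i ω * ε j ω ∂μ = if i = j then 1 else 0)
    (L : ℕ) (hL : 1 ≤ L) (i j : Fin n) (d : ℕ) (hd : G.degree i = d)
    (p : G.Walk i j) (hpath : p.IsPath) (hlen : p.length = L)
    (hdeg : ∀ v ∈ p.support, v ≠ i → v ≠ j → G.degree v ≤ 3) :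
    (4 : ℝ) ^ (2 - 2 * (L : ℤ)) / (((d : ℝ) + 1) * ((G.degree j : ℝ) + 1))
      ≤ ∫ ω, ((Tmat G ^ L).mulVec (fun k => ε k ω) i) ^ 2 ∂μ := by
  rw [integral_sq_mulVec _ μ ε hint2 hcov i]
  have hkey := key_walk G p hpath hdeg (hlen ▸ hL)
  rw [hlen, hd] at hkey
  set sa := Real.sqrt ((d : ℝ) + 1) with hsa
  set sb := Real.sqrt ((G.degree j : ℝ) + 1) with hsb
  have hsa0 : (0:ℝ) < sa := Real.sqrt_pos.2 (by positivity)
  have hsb0 : (0:ℝ) < sb := Real.sqrt_pos.2 (by positivity)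
  have hsa2 : sa ^ 2 = (d : ℝ) + 1 := Real.sq_sqrt (by positivity)
  have hsb2 : sb ^ 2 = (G.degree j : ℝ) + 1 := Real.sq_sqrt (by positivity)
  have h1 : (4 : ℝ) ^ (2 - 2 * (L : ℤ)) / (((d : ℝ) + 1) * ((G.degree j : ℝ) + 1))
      = (1 / ((4:ℝ) ^ (L - 1) * (sa * sb))) ^ 2 := by
    have hz : (2 - 2 * (L : ℤ)) = -(((2 * (L - 1) : ℕ) : ℤ)) := by
      push_cast [Nat.cast_sub hL]; ring
    rw [hz, _root_.zpow_neg, zpow_natCast, mul_comm 2 (L-1), pow_mul]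
    rw [div_pow, one_pow, mul_pow, mul_pow, hsa2, hsb2]
    rw [inv_eq_one_div, div_div]
  rw [h1]
  calc (1 / ((4:ℝ) ^ (L - 1) * (sa * sb))) ^ 2
      ≤ ((Tmat G ^ L) i j) ^ 2 := by
        apply pow_le_pow_left₀ (by positivity) hkey
    _ ≤ ∑ k, ((Tmat G ^ L) i k) ^ 2 :=
        Finset.single_le_sum (f := fun k => ((Tmat G ^ L) i k) ^ 2)
          (fun k _ => sq_nonneg _) (Finset.mem_univ j)
end
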